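/- arXiv:math/9912244 — 5 statements merged into one kernel-verified Lean document; each statement's English description precedes it below -/
import Mathlib

section
/- Let C and D be two disjoint nonempty subsets of {1,…,N}, and let Z_{CD} = { r ∈ X : r_i = u for all i ∈ C, r_i = w for all i ∈ D, r_i = 0 for i ∉ C ∪ D, where u,w ∈ ℝ^ν satisfy M_C u + M_D w = 0 }. Then Z_{CD} is a ν-dimensional linear subspace of X, and for every r ∈ X the squared norm of the orthogonal projection of r onto Z_{CD} equals (M_C M_D/(M_C + M_D)) |R_C(r) − R_D(r)|_e², where |·|_e is the Euclidean norm on ℝ^ν. In particular, for singletons C = {i}, D = {j} this equals (m_i m_j/(m_i + m_j)) |r_i − r_j|_e². -/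
open scoped BigOperators

noncomputable section

/-- The one-particle space `ℝ^ν`. -/
abbrev Vec (ν : ℕ) := EuclideanSpace ℝ (Fin ν)

/-- Configurations of `N` particles in `ℝ^ν`. -/
abbrev Conf (N ν : ℕ) := Fin N → Vec ν

/-- The mass inner product `⟨r,s⟩ = Σ m_i (r_i · s_i)`. -/
def minner {N ν : ℕ} (m : Fin N → ℝ) (r s : Conf N ν) : ℝ :=
  ∑ i, m i * (inner ℝ (r i) (s i) : ℝ)

/-- The total mass `M_C = Σ_{i∈C} m_i` of a subset `C`. -/
def Mtot {N : ℕ} (m : Fin N → ℝ) (C : Finset (Fin N)) : ℝ := ∑ i ∈ C, m i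

/-- The weighted center `R_C(r) = M_C⁻¹ Σ_{i∈C} m_i r_i`. -/
def Rctr {N ν : ℕ} (m : Fin N → ℝ) (C : Finset (Fin N)) (r : Conf N ν) : Vec ν :=
  (Mtot m C)⁻¹ • ∑ i ∈ C, m i • r i

/-- The set `Z_{CD}`: configurations equal to `u` on `C`, `w` on `D`, `0` elsewhere,
with `M_C u + M_D w = 0`. -/
def Zcd {N ν : ℕ} (m : Fin N → ℝ) (C D : Finset (Fin N)) : Set (Conf N ν) :=
  {r | ∃ u w : Vec ν, Mtot m C • u + Mtot m D • w = 0 ∧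
        ∀ i, r i = if i ∈ C then u else if i ∈ D then w else 0}

/-!
Pairing a configuration `r` with the element of `Z_{CD}` that equals `u` on `C` and `w` on `D`
gives `⟪M_C R_C(r), u⟫ + ⟪M_D R_D(r), w⟫`, so `r` is orthogonal to `Z_{CD}` as soon as
`R_C(r) = R_D(r)`. The projection `z` of `r` is therefore determined by `M_C u + M_D w = 0` and
`u - w = R_C(r) - R_D(r)`, whence `u = M_D d / (M_C + M_D)`, `w = -M_C d / (M_C + M_D)` with
`d = R_C(r) - R_D(r)`, and `|z|² = M_C |u|² + M_D |w|² = M_C M_D / (M_C + M_D) |d|²`.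
-/

def twoBlock {N ν : ℕ} (C D : Finset (Fin N)) (u w : Vec ν) : Conf N ν :=
  fun i => if i ∈ C then u else if i ∈ D then w else 0

section TwoBlock

variable {N ν : ℕ} {m : Fin N → ℝ} {C D : Finset (Fin N)}

theorem twoBlock_mem_Zcd {u w : Vec ν} (h : Mtot m C • u + Mtot m D • w = 0) :
    twoBlock C D u w ∈ Zcd m C D :=
  ⟨u, w, h, fun _ => rfl⟩

theorem mem_Zcd_iff {r : Conf N ν} :
    r ∈ Zcd m C D ↔ ∃ u w : Vec ν, Mtot m C • u + Mtot m D • w = 0 ∧ r = twoBlock C D u w := by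
  simp only [Zcd, twoBlock, Set.mem_ofPred_eq, funext_iff]

theorem sum_twoBlock {M : Type*} [AddCommMonoid M] (hCD : Disjoint C D) (f : Fin N → Vec ν → M)
    (hf : ∀ i, f i 0 = 0) (u w : Vec ν) :
    ∑ i, f i (twoBlock C D u w i) = ∑ i ∈ C, f i u + ∑ i ∈ D, f i w := by
  rw [← Finset.sum_subset (Finset.subset_univ (C ∪ D)) fun i _ hi => ?_,
    Finset.sum_union hCD]
  · congr 1
    · exact Finset.sum_congr rfl fun i hi => by simp only [twoBlock, if_pos hi]
    · refine Finset.sum_congr rfl fun i hi => ?_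
      simp only [twoBlock, if_neg (Finset.disjoint_right.mp hCD hi), if_pos hi]
  · rw [Finset.mem_union, not_or] at hi
    simp only [twoBlock, if_neg hi.1, if_neg hi.2, hf]

theorem sum_smul_twoBlock (hCD : Disjoint C D) (u w : Vec ν) :
    ∑ i, m i • twoBlock C D u w i = Mtot m C • u + Mtot m D • w := by
  rw [sum_twoBlock hCD (fun i v => m i • v) (fun i => smul_zero _), Mtot, Mtot,
    Finset.sum_smul, Finset.sum_smul]

theorem sum_smul_eq_zero_of_mem_Zcd (hCD : Disjoint C D) {r : Conf N ν} (hr : r ∈ Zcd m C D) :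
    ∑ i, m i • r i = 0 := by
  obtain ⟨u, w, h, rfl⟩ := mem_Zcd_iff.mp hr
  rwa [sum_smul_twoBlock hCD]

theorem minner_twoBlock (hCD : Disjoint C D) (r : Conf N ν) (u w : Vec ν) :
    minner m r (twoBlock C D u w) =
      inner ℝ (∑ i ∈ C, m i • r i) u + inner ℝ (∑ i ∈ D, m i • r i) w := by
  rw [minner, sum_twoBlock hCD (fun i v => m i * inner ℝ (r i) v) (fun i => by simp),
    sum_inner, sum_inner]
  simp only [real_inner_smul_left]

theorem sum_smul_twoBlock_left (u w : Vec ν) :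
    ∑ i ∈ C, m i • twoBlock C D u w i = Mtot m C • u := by
  rw [Mtot, Finset.sum_smul]
  exact Finset.sum_congr rfl fun i hi => by simp only [twoBlock, if_pos hi]

theorem sum_smul_twoBlock_right (hCD : Disjoint C D) (u w : Vec ν) :
    ∑ i ∈ D, m i • twoBlock C D u w i = Mtot m D • w := by
  rw [Mtot, Finset.sum_smul]
  refine Finset.sum_congr rfl fun i hi => ?_
  simp only [twoBlock, if_neg (Finset.disjoint_right.mp hCD hi), if_pos hi]

theorem minner_twoBlock_self (hCD : Disjoint C D) (u w : Vec ν) :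
    minner m (twoBlock C D u w) (twoBlock C D u w) =
      Mtot m C * ‖u‖ ^ 2 + Mtot m D * ‖w‖ ^ 2 := by
  rw [minner_twoBlock hCD, sum_smul_twoBlock_left, sum_smul_twoBlock_right hCD,
    real_inner_smul_left, real_inner_smul_left, real_inner_self_eq_norm_sq,
    real_inner_self_eq_norm_sq]

end TwoBlock

section Centers

variable {N ν : ℕ} {m : Fin N → ℝ} {C D : Finset (Fin N)}

theorem Mtot_smul_Rctr (hC : Mtot m C ≠ 0) (r : Conf N ν) :
    Mtot m C • Rctr m C r = ∑ i ∈ C, m i • r i := by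
  rw [Rctr, smul_inv_smul₀ hC]

theorem Rctr_sub (r s : Conf N ν) : Rctr m C (r - s) = Rctr m C r - Rctr m C s := by
  simp only [Rctr, Pi.sub_apply, smul_sub, Finset.sum_sub_distrib]

theorem Rctr_twoBlock_left (hC : Mtot m C ≠ 0) (u w : Vec ν) :
    Rctr m C (twoBlock C D u w) = u := by
  rw [Rctr, sum_smul_twoBlock_left, inv_smul_smul₀ hC]

theorem Rctr_twoBlock_right (hCD : Disjoint C D) (hD : Mtot m D ≠ 0) (u w : Vec ν) :
    Rctr m D (twoBlock C D u w) = w := by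
  rw [Rctr, sum_smul_twoBlock_right hCD, inv_smul_smul₀ hD]

theorem Mtot_singleton (i : Fin N) : Mtot m {i} = m i :=
  Finset.sum_singleton _ _

theorem Rctr_singleton {i : Fin N} (hi : m i ≠ 0) (r : Conf N ν) : Rctr m {i} r = r i := by
  rw [Rctr, Mtot_singleton, Finset.sum_singleton, inv_smul_smul₀ hi]

theorem minner_eq_zero_of_Rctr_eq (hCD : Disjoint C D) (hC : Mtot m C ≠ 0) (hD : Mtot m D ≠ 0)
    {s z : Conf N ν} (hs : Rctr m C s = Rctr m D s) (hz : z ∈ Zcd m C D) : minner m s z = 0 := by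
  obtain ⟨u, w, h, rfl⟩ := mem_Zcd_iff.mp hz
  rw [minner_twoBlock hCD, ← Mtot_smul_Rctr hC, ← Mtot_smul_Rctr hD, hs,
    real_inner_smul_left, real_inner_smul_left, ← real_inner_smul_right,
    ← real_inner_smul_right, ← inner_add_right, h, inner_zero_right]

end Centers

def zcdParam {N : ℕ} (ν : ℕ) (m : Fin N → ℝ) (C D : Finset (Fin N)) : Vec ν →ₗ[ℝ] Conf N ν where
  toFun u := twoBlock C D u ((-(Mtot m C / Mtot m D)) • u)
  map_add' u u' := by
    funext i
    simp only [twoBlock, Pi.add_apply]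
    split_ifs <;> simp [smul_add]
  map_smul' c u := by
    funext i
    simp only [twoBlock, Pi.smul_apply, RingHom.id_apply]
    split_ifs <;> simp [smul_comm c]

section Param

variable {N ν : ℕ} {m : Fin N → ℝ} {C D : Finset (Fin N)}

theorem coe_range_zcdParam (hD : Mtot m D ≠ 0) :
    (LinearMap.range (zcdParam ν m C D) : Set (Conf N ν)) = Zcd m C D := by
  ext r
  rw [SetLike.mem_coe, LinearMap.mem_range, mem_Zcd_iff]
  constructor
  · rintro ⟨u, rfl⟩
    refine ⟨u, _, ?_, rfl⟩
    rw [smul_smul, ← add_smul, mul_neg, mul_div_cancel₀ _ hD, add_neg_cancel, zero_smul]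
  · rintro ⟨u, w, h, rfl⟩
    refine ⟨u, congrArg (twoBlock C D u) ?_⟩
    rw [neg_smul, div_eq_inv_mul, mul_smul, ← smul_neg, inv_smul_eq_iff₀ hD,
      ← eq_neg_of_add_eq_zero_right h]

theorem finrank_range_zcdParam (hC : C.Nonempty) :
    Module.finrank ℝ (LinearMap.range (zcdParam ν m C D)) = ν := by
  obtain ⟨i, hi⟩ := hC
  have hinj : Function.Injective (zcdParam ν m C D) := fun u u' h => by
    simpa [zcdParam, twoBlock, hi] using congrFun h i
  rw [LinearMap.finrank_range_of_inj hinj, finrank_euclideanSpace_fin]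

end Param

theorem exists_orthogonal_projection_Zcd {N ν : ℕ} {m : Fin N → ℝ} {C D : Finset (Fin N)}
    (hCD : Disjoint C D) (hC : 0 < Mtot m C) (hD : 0 < Mtot m D) (r : Conf N ν) :
    ∃ z ∈ Zcd m C D, (∀ w ∈ Zcd m C D, minner m (r - z) w = 0) ∧
      minner m z z = (Mtot m C * Mtot m D / (Mtot m C + Mtot m D)) *
        ‖Rctr m C r - Rctr m D r‖ ^ 2 := by
  set d := Rctr m C r - Rctr m D r
  have hS : Mtot m C + Mtot m D ≠ 0 := by positivity
  set u := (Mtot m D / (Mtot m C + Mtot m D)) • d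
  set w := (-(Mtot m C / (Mtot m C + Mtot m D))) • d
  have hsum : Mtot m C • u + Mtot m D • w = 0 := by
    rw [smul_smul, smul_smul, ← add_smul, mul_neg, mul_div_left_comm, add_neg_cancel, zero_smul]
  have hdiff : u - w = d := by
    rw [← sub_smul, sub_neg_eq_add, ← add_div, add_comm, div_self hS, one_smul]
  refine ⟨twoBlock C D u w, twoBlock_mem_Zcd hsum,
    fun z hz => minner_eq_zero_of_Rctr_eq hCD hC.ne' hD.ne' ?_ hz, ?_⟩
  · rw [Rctr_sub, Rctr_sub, Rctr_twoBlock_left hC.ne', Rctr_twoBlock_right hCD hD.ne',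
      sub_eq_sub_iff_sub_eq_sub, hdiff]
  · rw [minner_twoBlock_self hCD, norm_smul, norm_smul, mul_pow, mul_pow, Real.norm_eq_abs,
      Real.norm_eq_abs, sq_abs, sq_abs]
    field_simp
    ring

theorem stmt1_general {N ν : ℕ} (m : Fin N → ℝ) (hm : ∀ i, 0 < m i)
    (C D : Finset (Fin N)) (hC : C.Nonempty) (hD : D.Nonempty) (hCD : Disjoint C D) :
    (∃ Z : Submodule ℝ (Conf N ν), (Z : Set (Conf N ν)) = Zcd m C D ∧
        Module.finrank ℝ Z = ν) ∧
    (∀ r ∈ Zcd (ν := ν) m C D, ∑ i, m i • r i = 0) ∧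
    (∀ r : Conf N ν, (∑ i, m i • r i = 0) →
      ∃ z ∈ Zcd m C D, (∀ w ∈ Zcd m C D, minner m (r - z) w = 0) ∧
        minner m z z =
          (Mtot m C * Mtot m D / (Mtot m C + Mtot m D)) * ‖Rctr m C r - Rctr m D r‖ ^ 2) ∧
    (∀ i j : Fin N, i ≠ j → ∀ r : Conf N ν, (∑ k, m k • r k = 0) →
      ∃ z ∈ Zcd m {i} {j}, (∀ w ∈ Zcd m {i} {j}, minner m (r - z) w = 0) ∧
        minner m z z = (m i * m j / (m i + m j)) * ‖r i - r j‖ ^ 2) := by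
  have hMC : 0 < Mtot m C := Finset.sum_pos (fun i _ => hm i) hC
  have hMD : 0 < Mtot m D := Finset.sum_pos (fun i _ => hm i) hD
  refine ⟨⟨_, coe_range_zcdParam hMD.ne', finrank_range_zcdParam hC⟩,
    fun r => sum_smul_eq_zero_of_mem_Zcd hCD,
    fun r _ => exists_orthogonal_projection_Zcd hCD hMC hMD r, fun i j hij r _ => ?_⟩
  have hMi : 0 < Mtot m {i} := (Mtot_singleton i).symm ▸ hm i
  have hMj : 0 < Mtot m {j} := (Mtot_singleton j).symm ▸ hm j
  simpa only [Mtot_singleton, Rctr_singleton (hm i).ne', Rctr_singleton (hm j).ne'] using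
    exists_orthogonal_projection_Zcd (Finset.disjoint_singleton.mpr hij) hMi hMj r

/-- `Z_{CD}` is a `ν`-dimensional linear subspace of `X`, and for every `r ∈ X`
the squared norm of the orthogonal projection of `r` onto `Z_{CD}` equals
`(M_C M_D/(M_C+M_D)) |R_C(r) − R_D(r)|²`; in particular for singletons `C = {i}`, `D = {j}`
it equals `(m_i m_j/(m_i+m_j)) |r_i − r_j|²`. -/
theorem stmt1 {N ν : ℕ} (hN : 2 ≤ N) (hν : 1 ≤ ν) (m : Fin N → ℝ) (hm : ∀ i, 0 < m i)
    (C D : Finset (Fin N)) (hC : C.Nonempty) (hD : D.Nonempty) (hCD : Disjoint C D) :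
    (∃ Z : Submodule ℝ (Conf N ν), (Z : Set (Conf N ν)) = Zcd m C D ∧
        Module.finrank ℝ Z = ν) ∧
    (∀ r ∈ Zcd (ν := ν) m C D, ∑ i, m i • r i = 0) ∧
    (∀ r : Conf N ν, (∑ i, m i • r i = 0) →
      ∃ z ∈ Zcd m C D, (∀ w ∈ Zcd m C D, minner m (r - z) w = 0) ∧
        minner m z z =
          (Mtot m C * Mtot m D / (Mtot m C + Mtot m D)) * ‖Rctr m C r - Rctr m D r‖ ^ 2) ∧
    (∀ i j : Fin N, i ≠ j → ∀ r : Conf N ν, (∑ k, m k • r k = 0) →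
      ∃ z ∈ Zcd m {i} {j}, (∀ w ∈ Zcd m {i} {j}, minner m (r - z) w = 0) ∧
        minner m z z = (m i * m j / (m i + m j)) * ‖r i - r j‖ ^ 2) :=
  stmt1_general m hm C D hC hD hCD
end
end

section
/- Let b be a cluster decomposition of {1,…,N} and let α = {i,j} (i ≠ j) be a pair contained in a single cluster of b. Then for every r ∈ X, (m_i m_j/(m_i + m_j)) |r_i − r_j|_e² ≤ |x^b(r)|². -/
/-!
Since `x_b(r)` is constant on the cluster containing `i` and `j`, the differences
`r_i - r_j` and `q_i - q_j` agree for `q = x^b(r)`. Keeping only the `i`-th and `j`-th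
terms of `|q|² = Σ m_k |q_k|²`, it remains to see `m_i m_j/(m_i+m_j) |u - v|² ≤ m_i |u|² + m_j |v|²`,
which follows from `(a + b)(a|u|² + b|v|²) = a b |u - v|² + |a u + b v|²`.
-/

open scoped BigOperators

noncomputable section

/-- The subspace `X_b = { r ∈ X : r is constant on each cluster of b }`. -/
def XbSet {N ν : ℕ} (m : Fin N → ℝ) (b : Setoid (Fin N)) : Set (Conf N ν) :=
  {r | (∑ i, m i • r i = 0) ∧ ∀ i j, b.r i j → r i = r j}

/-- `p` is the orthogonal projection of `r` onto `S` w.r.t. the mass inner product. -/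
def IsOrthProjOn {N ν : ℕ} (m : Fin N → ℝ) (S : Set (Conf N ν)) (r p : Conf N ν) : Prop :=
  p ∈ S ∧ ∀ w ∈ S, minner m (r - p) w = 0

section TwoPoint

variable {E : Type*} [NormedAddCommGroup E] [InnerProductSpace ℝ E]

theorem add_mul_add_mul_norm_sq_eq (a b : ℝ) (u v : E) :
    (a + b) * (a * ‖u‖ ^ 2 + b * ‖v‖ ^ 2) = a * b * ‖u - v‖ ^ 2 + ‖a • u + b • v‖ ^ 2 := by
  rw [norm_sub_sq_real, norm_add_sq_real, norm_smul, norm_smul, real_inner_smul_left,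
    real_inner_smul_right, Real.norm_eq_abs, Real.norm_eq_abs, mul_pow, mul_pow, sq_abs, sq_abs]
  ring

theorem reduced_mass_mul_norm_sub_sq_le {a b : ℝ} (ha : 0 < a) (hb : 0 < b) (u v : E) :
    a * b / (a + b) * ‖u - v‖ ^ 2 ≤ a * ‖u‖ ^ 2 + b * ‖v‖ ^ 2 := by
  have hab : 0 < a + b := add_pos ha hb
  rw [div_mul_eq_mul_div, div_le_iff₀ hab, mul_comm _ (a + b), add_mul_add_mul_norm_sq_eq]
  exact le_add_of_nonneg_right (sq_nonneg _)

end TwoPoint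

theorem minner_self_eq_sum {N ν : ℕ} (m : Fin N → ℝ) (q : Conf N ν) :
    minner m q q = ∑ k, m k * ‖q k‖ ^ 2 := by
  simp only [minner, real_inner_self_eq_norm_sq]

theorem add_le_minner_self {N ν : ℕ} {m : Fin N → ℝ} (hm : ∀ k, 0 ≤ m k) {i j : Fin N}
    (hij : i ≠ j) (q : Conf N ν) :
    m i * ‖q i‖ ^ 2 + m j * ‖q j‖ ^ 2 ≤ minner m q q := by
  rw [minner_self_eq_sum, ← Finset.sum_pair (f := fun k => m k * ‖q k‖ ^ 2) hij]
  exact Finset.sum_le_sum_of_subset_of_nonneg (Finset.subset_univ _)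
    fun k _ _ => mul_nonneg (hm k) (sq_nonneg _)

theorem stmt3_general {N ν : ℕ} (m : Fin N → ℝ) (hm : ∀ i, 0 < m i)
    (b : Setoid (Fin N)) (i j : Fin N) (hij : i ≠ j) (hb : b.r i j)
    (r : Conf N ν)
    (pb : Conf N ν) (hpb : IsOrthProjOn m (XbSet m b) r pb) :
    (m i * m j / (m i + m j)) * ‖r i - r j‖ ^ 2 ≤ minner m (r - pb) (r - pb) := by
  have hdiff : (r - pb) i - (r - pb) j = r i - r j := by
    simp only [Pi.sub_apply, hpb.1.2 i j hb, sub_sub_sub_cancel_right]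
  rw [← hdiff]
  exact (reduced_mass_mul_norm_sub_sq_le (hm i) (hm j) _ _).trans
    (add_le_minner_self (fun k => (hm k).le) hij _)

/-- if the pair `α = {i,j}` (with `i ≠ j`) lies in a single cluster of `b`,
then `(m_i m_j/(m_i+m_j)) |r_i − r_j|² ≤ |x^b(r)|²` for every `r ∈ X`, where
`x^b(r) = r − x_b(r)` and `x_b(r)` is the orthogonal projection of `r` onto `X_b`. -/
theorem stmt3 {N ν : ℕ} (hN : 2 ≤ N) (hν : 1 ≤ ν) (m : Fin N → ℝ) (hm : ∀ i, 0 < m i)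
    (b : Setoid (Fin N)) (i j : Fin N) (hij : i ≠ j) (hb : b.r i j)
    (r : Conf N ν) (hr : ∑ k, m k • r k = 0)
    (pb : Conf N ν) (hpb : IsOrthProjOn m (XbSet m b) r pb) :
    (m i * m j / (m i + m j)) * ‖r i - r j‖ ^ 2 ≤ minner m (r - pb) (r - pb) :=
  stmt3_general m hm b i j hij hb r pb hpb
end
end

section
/- (Lemma 3.1 iii) Let b be a cluster decomposition with 2 ≤ |b| ≤ N, let ρ > 0, θ > 0, let θ′ satisfy 0 < θ′ ≤ min(θ, 1), and let γ > 1. Set γ′_1 = γ(1+θ′) and γ′_2 = (1+γ)(1+θ′)^{-1}. Then: (a) T_b(ρ,θ) ∩ S_{θ′} ⊆ T̃_b(ρ,θ) ∩ S_{θ′}; (b) the closure of T̃_b(ρ,θ) ∩ S_{θ′} is compact and is contained in T̃_b(γ^{-1}ρ, γθ); and (c) T̃_b(γ^{-1}ρ, γθ) ∩ S_{θ′} ⊆ T_b((γ′_1)^{-1}ρ, γ′_2 θ) ∩ S_{θ′}. -/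
open scoped BigOperators

noncomputable section

open scoped Classical in
/-- `M_C`, the total mass of the `b`-cluster of `i`. -/
def Mcl {N : ℕ} (m : Fin N → ℝ) (b : Setoid (Fin N)) (i : Fin N) : ℝ :=
  ∑ j ∈ Finset.univ.filter (fun j => b.r i j), m j

open scoped Classical in
/-- `R_C(r)`, the weighted center of mass of the `b`-cluster of `i`. -/
def Rcl {N ν : ℕ} (m : Fin N → ℝ) (b : Setoid (Fin N)) (i : Fin N) (r : Conf N ν) : Vec ν :=
  (Mcl m b i)⁻¹ • ∑ j ∈ Finset.univ.filter (fun j => b.r i j), m j • r j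

/-- `|z_{CD}(r)|²` for the clusters `C ∋ i`, `D ∋ j` of `b`. -/
def zsq {N ν : ℕ} (m : Fin N → ℝ) (b : Setoid (Fin N)) (r : Conf N ν) (i j : Fin N) : ℝ :=
  (Mcl m b i * Mcl m b j / (Mcl m b i + Mcl m b j)) * ‖Rcl m b i r - Rcl m b j r‖ ^ 2

/-- The set `T_b(ρ,θ) ⊆ X`. -/
def Tb {N ν : ℕ} (m : Fin N → ℝ) (b : Setoid (Fin N)) (ρ θ : ℝ) : Set (Conf N ν) :=
  {x | (∑ i, m i • x i = 0) ∧
    (∀ i j, ¬ b.r i j → zsq m b x i j > ρ * minner m x x) ∧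
    ∃ p : Conf N ν, IsOrthProjOn m (XbSet m b) x p ∧
      minner m p p > (1 - θ) * minner m x x}

/-- The set `T̃_b(ρ,θ) ⊆ X`. -/
def Tbt {N ν : ℕ} (m : Fin N → ℝ) (b : Setoid (Fin N)) (ρ θ : ℝ) : Set (Conf N ν) :=
  {x | (∑ i, m i • x i = 0) ∧
    (∀ i j, ¬ b.r i j → zsq m b x i j > ρ) ∧
    ∃ p : Conf N ν, IsOrthProjOn m (XbSet m b) x p ∧
      minner m p p > 1 - θ}

/-- The spherical shell `S_{θ'} = { x ∈ X : 1 ≤ |x|² ≤ 1 + θ' }`. -/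
def Sshell {N ν : ℕ} (m : Fin N → ℝ) (θ' : ℝ) : Set (Conf N ν) :=
  {x | (∑ i, m i • x i = 0) ∧ 1 ≤ minner m x x ∧ minner m x x ≤ 1 + θ'}


/-! (a) and (c) are elementary inequalities once `1 ≤ |x|² ≤ 1 + θ'`. For (b), the orthogonal
projection onto `X_b` replaces each `r_i` by the centre of mass of its cluster, so it depends
continuously on `x`; the non-strict versions of the inequalities defining `T̃_b(ρ,θ)` then cut out a
closed set containing the closure, and that set lies in `T̃_b(γ⁻¹ρ, γθ)` because `γ⁻¹ρ < ρ` and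
`1 - γθ < 1 - θ`. Compactness holds because `S_θ'` is bounded in a finite-dimensional space. -/

open scoped Classical

variable {N ν : ℕ} (m : Fin N → ℝ) (b : Setoid (Fin N))

section MassInner

lemma minner_self_nonneg (hm : ∀ i, 0 ≤ m i) (x : Conf N ν) : 0 ≤ minner m x x :=
  Finset.sum_nonneg fun i _ => mul_nonneg (hm i) real_inner_self_nonneg

lemma minner_sub_left (u v w : Conf N ν) :
    minner m (u - v) w = minner m u w - minner m v w := by
  simp [minner, inner_sub_left, mul_sub, Finset.sum_sub_distrib]

lemma mul_norm_sq_le_minner_self (hm : ∀ i, 0 ≤ m i) (x : Conf N ν) (i : Fin N) :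
    m i * ‖x i‖ ^ 2 ≤ minner m x x := by
  rw [← real_inner_self_eq_norm_sq]
  exact Finset.single_le_sum (f := fun j => m j * inner ℝ (x j) (x j))
    (fun j _ => mul_nonneg (hm j) real_inner_self_nonneg) (Finset.mem_univ i)

lemma eq_zero_of_minner_self_eq_zero (hm : ∀ i, 0 < m i) {x : Conf N ν}
    (h : minner m x x = 0) : x = 0 := by
  funext i
  have hi := mul_norm_sq_le_minner_self m (fun j => (hm j).le) x i
  rw [h] at hi
  have : ‖x i‖ ^ 2 = 0 := le_antisymm (nonpos_of_mul_nonpos_right hi (hm i)) (by positivity)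
  simpa using this

lemma Continuous.minner {α : Type*} [TopologicalSpace α] {f g : α → Conf N ν}
    (hf : Continuous f) (hg : Continuous g) : Continuous fun a => minner m (f a) (g a) :=
  continuous_finsetSum _ fun i _ =>
    continuous_const.mul (((continuous_apply i).comp hf).inner ((continuous_apply i).comp hg))

lemma IsOrthProjOn.unique {S : Set (Conf N ν)} (hS : ∀ u ∈ S, ∀ v ∈ S, u - v ∈ S)
    (hm : ∀ i, 0 < m i) {x p q : Conf N ν} (hp : IsOrthProjOn m S x p)
    (hq : IsOrthProjOn m S x q) : p = q := by
  have hpq := hS p hp.1 q hq.1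
  have h : minner m (p - q) (p - q) = 0 := by
    rw [show p - q = (x - q) - (x - p) by abel, minner_sub_left,
      ← show p - q = (x - q) - (x - p) by abel, hq.2 _ hpq, hp.2 _ hpq, sub_zero]
  exact sub_eq_zero.mp (eq_zero_of_minner_self_eq_zero m hm h)

end MassInner

section Clusters

lemma Mcl_pos (hm : ∀ i, 0 < m i) (i : Fin N) : 0 < Mcl m b i :=
  Finset.sum_pos (fun j _ => hm j) ⟨i, by simp⟩

lemma filter_rel_eq_of_rel {i j : Fin N} (h : b.r i j) :
    Finset.univ.filter (fun k => b.r i k) = Finset.univ.filter (fun k => b.r j k) := by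
  ext k
  simp only [Finset.mem_filter, Finset.mem_univ, true_and]
  exact ⟨b.iseqv.trans (b.iseqv.symm h), b.iseqv.trans h⟩

lemma Mcl_congr {i j : Fin N} (h : b.r i j) : Mcl m b i = Mcl m b j := by
  rw [Mcl, Mcl, filter_rel_eq_of_rel b h]

lemma Rcl_congr {i j : Fin N} (h : b.r i j) (x : Conf N ν) : Rcl m b i x = Rcl m b j x := by
  rw [Rcl, Rcl, Mcl_congr m b h, filter_rel_eq_of_rel b h]

lemma sum_mul_inv_Mcl_smul_sum_filter {E : Type*} [AddCommGroup E] [Module ℝ E]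
    (hm : ∀ i, 0 < m i) (c : Fin N → E) :
    ∑ i, (m i * (Mcl m b i)⁻¹) • ∑ j ∈ Finset.univ.filter (fun j => b.r i j), m j • c j
      = ∑ j, m j • c j := by
  -- after swapping the sums, the weights `m i / M_C` over the cluster `C ∋ j` add up to `1`
  simp_rw [Finset.smul_sum, smul_smul, Finset.sum_filter]
  rw [Finset.sum_comm]
  refine Finset.sum_congr rfl fun j _ => ?_
  rw [← Finset.sum_filter]
  have hM : ∀ i ∈ Finset.univ.filter (fun i => b.r i j),
      (m i * (Mcl m b i)⁻¹ * m j) • c j = (m i * ((Mcl m b j)⁻¹ * m j)) • c j := by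
    intro i hi
    rw [Mcl_congr m b (Finset.mem_filter.mp hi).2, mul_assoc]
  have hfilter : Finset.univ.filter (fun i => b.r i j) = Finset.univ.filter (fun i => b.r j i) :=
    Finset.filter_congr fun i _ => ⟨b.iseqv.symm, b.iseqv.symm⟩
  rw [Finset.sum_congr rfl hM, ← Finset.sum_smul, ← Finset.sum_mul, hfilter, ← Mcl, ← mul_assoc,
    mul_inv_cancel₀ (Mcl_pos m b hm j).ne', one_mul]

def clusterProj (x : Conf N ν) : Conf N ν := fun i => Rcl m b i x

lemma sum_smul_clusterProj (hm : ∀ i, 0 < m i) (x : Conf N ν) :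
    ∑ i, m i • clusterProj m b x i = ∑ i, m i • x i := by
  simp only [clusterProj, Rcl, smul_smul]
  exact sum_mul_inv_Mcl_smul_sum_filter m b hm x

lemma minner_clusterProj_left (hm : ∀ i, 0 < m i) (x : Conf N ν) {w : Conf N ν}
    (hw : w ∈ XbSet m b) : minner m (clusterProj m b x) w = minner m x w := by
  have hterm : ∀ i, m i * inner ℝ (clusterProj m b x i) (w i) = (m i * (Mcl m b i)⁻¹) •
      ∑ j ∈ Finset.univ.filter (fun j => b.r i j), m j • inner ℝ (x j) (w j) := by
    intro i
    simp only [clusterProj, Rcl, real_inner_smul_left, sum_inner, smul_eq_mul]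
    rw [Finset.mul_sum, Finset.mul_sum, Finset.mul_sum]
    refine Finset.sum_congr rfl fun j hj => ?_
    rw [hw.2 i j (Finset.mem_filter.mp hj).2]
    ring
  simp only [minner, hterm]
  exact sum_mul_inv_Mcl_smul_sum_filter m b hm _

lemma sub_mem_XbSet {u v : Conf N ν} (hu : u ∈ XbSet m b) (hv : v ∈ XbSet m b) :
    u - v ∈ XbSet m b :=
  ⟨by simp only [Pi.sub_apply, smul_sub, Finset.sum_sub_distrib, hu.1, hv.1, sub_zero],
    fun i j h => by simp only [Pi.sub_apply, hu.2 i j h, hv.2 i j h]⟩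

lemma isOrthProjOn_clusterProj (hm : ∀ i, 0 < m i) {x : Conf N ν} (hx : ∑ i, m i • x i = 0) :
    IsOrthProjOn m (XbSet m b) x (clusterProj m b x) :=
  ⟨⟨(sum_smul_clusterProj m b hm x).trans hx, fun i j h => Rcl_congr m b h x⟩,
    fun w hw => by rw [minner_sub_left, minner_clusterProj_left m b hm x hw, sub_self]⟩

lemma IsOrthProjOn.eq_clusterProj (hm : ∀ i, 0 < m i) {x p : Conf N ν}
    (hx : ∑ i, m i • x i = 0) (hp : IsOrthProjOn m (XbSet m b) x p) : p = clusterProj m b x :=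
  hp.unique m (fun _ hu _ hv => sub_mem_XbSet m b hu hv) hm (isOrthProjOn_clusterProj m b hm hx)

lemma continuous_Rcl (i : Fin N) : Continuous fun x : Conf N ν => Rcl m b i x := by
  unfold Rcl
  have hcoord : ∀ j, Continuous fun x : Conf N ν => x j := continuous_apply
  exact (continuous_finsetSum _ fun j _ => (hcoord j).const_smul (m j)).const_smul (Mcl m b i)⁻¹

lemma continuous_zsq (i j : Fin N) : Continuous fun x : Conf N ν => zsq m b x i j :=
  continuous_const.mul (((continuous_Rcl m b i).sub (continuous_Rcl m b j)).norm.pow 2)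

lemma continuous_clusterProj : Continuous (clusterProj (ν := ν) m b) :=
  continuous_pi (continuous_Rcl m b)

end Clusters

section Regions

lemma isBounded_Sshell (hm : ∀ i, 0 < m i) (θ' : ℝ) :
    Bornology.IsBounded (Sshell (ν := ν) m θ') := by
  rw [← Bornology.forall_isBounded_image_eval_iff]
  intro i
  refine (Metric.isBounded_closedBall (x := 0) (r := √((1 + θ') / m i))).subset ?_
  rintro _ ⟨x, ⟨-, -, hx⟩, rfl⟩
  rw [mem_closedBall_zero_iff]
  refine Real.le_sqrt_of_sq_le ((le_div_iff₀ (hm i)).mpr ?_)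
  linarith [mul_norm_sq_le_minner_self m (fun j => (hm j).le) x i]

lemma closure_Tbt_subset_Tbt (hm : ∀ i, 0 < m i) {ρ ρ' θ θ' : ℝ} (hρ : ρ' < ρ) (hθ : θ < θ') :
    closure (Tbt (ν := ν) m b ρ θ) ⊆ Tbt m b ρ' θ' := by
  set K : Set (Conf N ν) := {x | (∑ i, m i • x i = 0) ∧ (∀ i j, ¬ b.r i j → ρ ≤ zsq m b x i j) ∧
    1 - θ ≤ minner m (clusterProj m b x) (clusterProj m b x)}
  have hK : IsClosed K := by
    simp only [K, Set.ofPred_and, Set.ofPred_forall]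
    exact (isClosed_eq (continuous_finsetSum _ fun i _ => (continuous_apply i).const_smul (m i))
      continuous_const).inter ((isClosed_iInter fun i => isClosed_iInter fun j =>
        isClosed_iInter fun _ => isClosed_le continuous_const (continuous_zsq m b i j)).inter
      (isClosed_le continuous_const
        ((continuous_clusterProj m b).minner m (continuous_clusterProj m b))))
  have hTK : Tbt m b ρ θ ⊆ K := by
    rintro x ⟨hx, hz, p, hp, hpp⟩
    refine ⟨hx, fun i j hij => (hz i j hij).le, ?_⟩
    rw [← hp.eq_clusterProj m b hm hx]
    exact hpp.le
  intro x hcl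
  obtain ⟨hx, hz, hP⟩ := closure_minimal hTK hK hcl
  exact ⟨hx, fun i j hij => hρ.trans_le (hz i j hij), _, isOrthProjOn_clusterProj m b hm hx,
    by linarith⟩

lemma Tb_inter_Sshell_subset (hm : ∀ i, 0 ≤ m i) {ρ θ θ' : ℝ} (hρ : 0 ≤ ρ) :
    Tb (ν := ν) m b ρ θ ∩ Sshell m θ' ⊆ Tbt m b ρ θ ∩ Sshell m θ' := by
  rintro x ⟨⟨hx, hz, p, hp, hpp⟩, hS⟩
  have hx1 : 1 ≤ minner m x x := hS.2.1
  refine ⟨⟨hx, fun i j hij => (le_mul_of_one_le_right hρ hx1).trans_lt (hz i j hij), p, hp, ?_⟩, hS⟩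
  rcases le_or_gt 0 (1 - θ) with hθ | hθ
  · exact (le_mul_of_one_le_right hθ hx1).trans_lt hpp
  · exact hθ.trans_le (minner_self_nonneg m hm p)

lemma Tbt_inter_Sshell_subset_Tb (hm : ∀ i, 0 ≤ m i) {ρ θ θ' γ : ℝ} (hρ : 0 ≤ ρ) (hγ : 0 ≤ γ)
    (hθ' : θ' ≤ θ) :
    Tbt (ν := ν) m b (γ⁻¹ * ρ) (γ * θ) ∩ Sshell m θ' ⊆
      Tb m b ((γ * (1 + θ'))⁻¹ * ρ) ((1 + γ) * (1 + θ')⁻¹ * θ) ∩ Sshell m θ' := by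
  rintro x ⟨⟨hx, hz, p, hp, hpp⟩, hS⟩
  have hx1 : 1 ≤ minner m x x := hS.2.1
  have hx2 : minner m x x ≤ 1 + θ' := hS.2.2
  have hθ'₀ : 0 < 1 + θ' := by linarith
  refine ⟨⟨hx, fun i j hij => ?_, p, hp, ?_⟩, hS⟩
  · calc (γ * (1 + θ'))⁻¹ * ρ * minner m x x = γ⁻¹ * ρ * (minner m x x / (1 + θ')) := by
          rw [mul_inv]; ring
      _ ≤ γ⁻¹ * ρ := mul_le_of_le_one_right (by positivity) (div_le_one_of_le₀ hx2 hθ'₀.le)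
      _ < zsq m b x i j := hz i j hij
  · set β := (1 + γ) * (1 + θ')⁻¹ * θ
    rcases le_or_gt 0 (1 - β) with hβ | hβ
    · have hβ' : (1 - β) * (1 + θ') = 1 + θ' - (1 + γ) * θ := by
        simp only [β]; field_simp
      nlinarith [mul_le_mul_of_nonneg_left hx2 hβ]
    · nlinarith [minner_self_nonneg m hm p]

end Regions

theorem stmt5_general {N ν : ℕ} (m : Fin N → ℝ) (hm : ∀ i, 0 < m i)
    (b : Setoid (Fin N))
    (ρ θ θ' γ : ℝ) (hρ : 0 < ρ) (hθ : 0 < θ) (hθ' : θ' ≤ min θ 1)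
    (hγ : 1 < γ) :
    Tb (ν := ν) m b ρ θ ∩ Sshell m θ' ⊆ Tbt (ν := ν) m b ρ θ ∩ Sshell m θ' ∧
    IsCompact (closure (Tbt (ν := ν) m b ρ θ ∩ Sshell m θ')) ∧
    closure (Tbt (ν := ν) m b ρ θ ∩ Sshell m θ') ⊆ Tbt (ν := ν) m b (γ⁻¹ * ρ) (γ * θ) ∧
    Tbt (ν := ν) m b (γ⁻¹ * ρ) (γ * θ) ∩ Sshell m θ' ⊆
      Tb (ν := ν) m b ((γ * (1 + θ'))⁻¹ * ρ) (((1 + γ) * (1 + θ')⁻¹) * θ) ∩ Sshell m θ' := by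
  have hm₀ : ∀ i, 0 ≤ m i := fun i => (hm i).le
  refine ⟨Tb_inter_Sshell_subset m b hm₀ hρ.le, ?_, ?_, Tbt_inter_Sshell_subset_Tb m b hm₀ hρ.le
    (zero_le_one.trans hγ.le) (hθ'.trans (min_le_left _ _))⟩
  · exact Metric.isCompact_of_isClosed_isBounded isClosed_closure
      ((isBounded_Sshell m hm θ').subset Set.inter_subset_right).closure
  · exact (closure_mono Set.inter_subset_left).trans (closure_Tbt_subset_Tbt m b hm
      (mul_lt_of_lt_one_left hρ (inv_lt_one_of_one_lt₀ hγ)) (lt_mul_of_one_lt_left hθ hγ))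

/-- Lemma 3.1 iii: with `γ′_1 = γ(1+θ′)` and `γ′_2 = (1+γ)(1+θ′)⁻¹`,
(a) `T_b(ρ,θ) ∩ S_{θ′} ⊆ T̃_b(ρ,θ) ∩ S_{θ′}`;
(b) the closure of `T̃_b(ρ,θ) ∩ S_{θ′}` is compact and contained in `T̃_b(γ⁻¹ρ, γθ)`;
(c) `T̃_b(γ⁻¹ρ, γθ) ∩ S_{θ′} ⊆ T_b((γ′_1)⁻¹ρ, γ′_2 θ) ∩ S_{θ′}`. -/
theorem stmt5 {N ν : ℕ} (hN : 2 ≤ N) (hν : 1 ≤ ν) (m : Fin N → ℝ) (hm : ∀ i, 0 < m i)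
    (b : Setoid (Fin N)) (hb2 : 2 ≤ Nat.card (Quotient b)) (hbN : Nat.card (Quotient b) ≤ N)
    (ρ θ θ' γ : ℝ) (hρ : 0 < ρ) (hθ : 0 < θ) (hθ'0 : 0 < θ') (hθ' : θ' ≤ min θ 1)
    (hγ : 1 < γ) :
    Tb (ν := ν) m b ρ θ ∩ Sshell m θ' ⊆ Tbt (ν := ν) m b ρ θ ∩ Sshell m θ' ∧
    IsCompact (closure (Tbt (ν := ν) m b ρ θ ∩ Sshell m θ')) ∧
    closure (Tbt (ν := ν) m b ρ θ ∩ Sshell m θ') ⊆ Tbt (ν := ν) m b (γ⁻¹ * ρ) (γ * θ) ∧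
    Tbt (ν := ν) m b (γ⁻¹ * ρ) (γ * θ) ∩ Sshell m θ' ⊆
      Tb (ν := ν) m b ((γ * (1 + θ'))⁻¹ * ρ) (((1 + γ) * (1 + θ')⁻¹) * θ) ∩ Sshell m θ' :=
  stmt5_general m hm b ρ θ θ' γ hρ hθ hθ' hγ
end
end

section
/- (Covering construction (4.18)–(4.19)) Let T ⊂ ℝ be a compact countable set and let τ_0 > 0. Then there exist an integer L ≥ 0, real numbers λ_1,…,λ_L, radii τ_1,…,τ_L ∈ (0, τ_0) and a number σ_0 ∈ (0, τ_0) such that: (1) T ⊆ ⋃_{ℓ=1}^L (λ_ℓ − τ_ℓ, λ_ℓ + τ_ℓ); (2) for each ℓ there exists λ̃_ℓ ∈ T with (λ_ℓ − τ_ℓ, λ_ℓ + τ_ℓ) ⊆ (λ̃_ℓ − τ_0, λ̃_ℓ + τ_0); and (3) for all ℓ ≠ k, the distance between the intervals (λ_ℓ − τ_ℓ, λ_ℓ + τ_ℓ) and (λ_k − τ_k, λ_k + τ_k) is greater than 4σ_0. -/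
/-!
A countable set has dense complement, so one can place cut points `c₀ ≤ c₁ ≤ ⋯ ≤ c_N` outside
the compact set `T`, with consecutive gaps shorter than `τ₀` and `T ⊆ (c₀, c_N]`. Finitely many
points off the closed set `T` keep a uniform distance `2δ > 0` from it, so shrinking each gap
`(c_j, c_{j+1})` by `δ` at both ends still covers `T`, while distinct shrunken gaps are `2δ` apart.
Keeping only the shrunken gaps that meet `T` gives the intervals.
-/

open Set

theorem exists_monotone_cuts {T : Set ℝ} (hT : Bornology.IsBounded T) (hdense : Dense Tᶜ)
    {s : ℝ} (hs : 0 < s) :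
    ∃ (N : ℕ) (c : ℕ → ℝ), Monotone c ∧ (∀ j, c j ∉ T) ∧ (∀ j, c (j + 1) - c j < s) ∧
      T ⊆ Ioc (c 0) (c N) := by
  obtain ⟨r, hr⟩ := hT.subset_closedBall 0
  have hTr : ∀ t ∈ T, -r ≤ t ∧ t ≤ r := fun t ht => by
    simpa [abs_le, Real.dist_eq] using hr ht
  obtain ⟨h, hh0, rfl⟩ : ∃ h > 0, s = 2 * h := ⟨s / 2, by positivity, by ring⟩
  obtain ⟨N, hN⟩ := exists_nat_ge ((2 * r + h) / h)
  rw [div_le_iff₀ hh0] at hN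
  choose c hcT hc using fun j : ℕ => hdense.exists_between
    (lt_add_of_pos_right (-r - h + j * h) hh0)
  have hc_succ : ∀ j : ℕ, c j < c (j + 1) := fun j => by
    have := (hc j).2; have := (hc (j + 1)).1; push_cast at *; linarith
  refine ⟨N, c, (strictMono_nat_of_lt_succ hc_succ).monotone, hcT, fun j => ?_,
    fun t ht => ⟨?_, ?_⟩⟩
  · have := (hc j).1; have := (hc (j + 1)).2; push_cast at *; linarith
  · have := (hc 0).2; have := (hTr t ht).1; push_cast at *; linarith
  · have := (hc N).1; have := (hTr t ht).2; linarith

theorem exists_pos_le_dist_of_disjoint {X : Type*} [PseudoMetricSpace X] {T C : Set X}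
    (hT : IsClosed T) (hC : C.Finite) (hCT : Disjoint C T) :
    ∃ δ > 0, ∀ c ∈ C, ∀ t ∈ T, δ ≤ dist t c := by
  obtain ⟨δ, hδ, hsub⟩ :=
    hC.isCompact.exists_thickening_subset_open hT.isOpen_compl hCT.subset_compl_right
  refine ⟨δ, hδ, fun c hc t ht => not_lt.1 fun hlt => ?_⟩
  exact hsub (Metric.mem_thickening_iff.2 ⟨c, hc, hlt⟩) ht

theorem Monotone.le_abs_sub_of_mem_Ioo_shrink {c : ℕ → ℝ} (hc : Monotone c) {δ x y : ℝ}
    {j k : ℕ} (hjk : j < k) (hx : x ∈ Ioo (c j + δ) (c (j + 1) - δ))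
    (hy : y ∈ Ioo (c k + δ) (c (k + 1) - δ)) : 2 * δ ≤ |x - y| := by
  have : c (j + 1) ≤ c k := hc hjk
  rw [abs_sub_comm]
  exact le_trans (by linarith [hx.2, hy.1]) (le_abs_self _)

theorem Monotone.exists_lt_mem_Ioo_shrink {c : ℕ → ℝ} (hc : Monotone c) {N : ℕ} {t δ : ℝ}
    (ht : t ∈ Ioc (c 0) (c N)) (hδ : 0 < δ) (hmargin : ∀ j ≤ N, 2 * δ ≤ |t - c j|) :
    ∃ j < N, t ∈ Ioo (c j + δ) (c (j + 1) - δ) := by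
  rw [← hc.biUnion_Ico_Ioc_map_succ, mem_iUnion₂] at ht
  obtain ⟨j, hjN, hjt⟩ := ht
  simp only [Order.succ_eq_add_one, mem_Ico] at hjN hjt
  have h₀ := hmargin j (by omega)
  have h₁ := hmargin (j + 1) (by omega)
  rw [abs_of_pos (sub_pos.2 hjt.1)] at h₀
  have htj : t < c (j + 1) := lt_of_le_of_ne hjt.2 fun h => by simp [h] at h₁; linarith
  rw [abs_of_neg (sub_neg.2 htj)] at h₁
  exact ⟨j, hjN.2, by linarith, by linarith⟩

theorem le_sInf_abs_sub {A B : Set ℝ} (hA : A.Nonempty) (hB : B.Nonempty) {g : ℝ}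
    (h : ∀ a ∈ A, ∀ b ∈ B, g ≤ |a - b|) :
    g ≤ sInf {d : ℝ | ∃ a ∈ A, ∃ b ∈ B, d = |a - b|} := by
  obtain ⟨a, ha⟩ := hA
  obtain ⟨b, hb⟩ := hB
  refine le_csInf ⟨_, a, ha, b, hb, rfl⟩ ?_
  rintro _ ⟨a, ha, b, hb, rfl⟩
  exact h a ha b hb

theorem Ioo_midpoint_sub_add_half (a b : ℝ) :
    Ioo ((a + b) / 2 - (b - a) / 2) ((a + b) / 2 + (b - a) / 2) = Ioo a b := by
  congr 1 <;> ring

theorem exists_separated_Ioo_cover {T : Set ℝ} (hT : IsCompact T) (hdense : Dense Tᶜ)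
    {s : ℝ} (hs : 0 < s) :
    ∃ (L : ℕ) (a b : Fin L → ℝ) (g : ℝ), 0 < g ∧ (∀ ℓ, b ℓ - a ℓ < s) ∧
      T ⊆ ⋃ ℓ, Ioo (a ℓ) (b ℓ) ∧ (∀ ℓ, (T ∩ Ioo (a ℓ) (b ℓ)).Nonempty) ∧
      ∀ ℓ k, ℓ ≠ k → ∀ x ∈ Ioo (a ℓ) (b ℓ), ∀ y ∈ Ioo (a k) (b k), g ≤ |x - y| := by
  classical
  obtain ⟨N, c, hc, hcT, hc_gap, hT_sub⟩ := exists_monotone_cuts hT.isBounded hdense hs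
  obtain ⟨ε, hε, hεT⟩ := exists_pos_le_dist_of_disjoint hT.isClosed ((finite_Iic N).image c)
    (disjoint_right.2 fun t ht ⟨j, _, hj⟩ => hcT j (hj ▸ ht))
  obtain ⟨δ, hδ, rfl⟩ : ∃ δ > 0, ε = 2 * δ := ⟨ε / 2, by positivity, by ring⟩
  have hmargin : ∀ t ∈ T, ∀ j ≤ N, 2 * δ ≤ |t - c j| := fun t ht j hj => by
    simpa [Real.dist_eq] using hεT (c j) (mem_image_of_mem c hj) t ht
  set F := (Finset.range N).filter fun j => (T ∩ Ioo (c j + δ) (c (j + 1) - δ)).Nonempty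
  set e := F.orderEmbOfFin rfl
  have heF : ∀ ℓ, e ℓ ∈ F := F.orderEmbOfFin_mem rfl
  refine ⟨F.card, fun ℓ => c (e ℓ) + δ, fun ℓ => c (e ℓ + 1) - δ, 2 * δ, by positivity,
    fun ℓ => by linarith [hc_gap (e ℓ)], fun t ht => ?_,
    fun ℓ => (Finset.mem_filter.1 (heF ℓ)).2, fun ℓ k hℓk x hx y hy => ?_⟩
  · obtain ⟨j, hjN, hjt⟩ := hc.exists_lt_mem_Ioo_shrink (hT_sub ht) hδ (hmargin t ht)
    have hjF : j ∈ F := Finset.mem_filter.2 ⟨Finset.mem_range.2 hjN, t, ht, hjt⟩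
    obtain ⟨ℓ, hℓ⟩ : j ∈ range e := by rwa [Finset.range_orderEmbOfFin]
    exact mem_iUnion.2 ⟨ℓ, by simpa only [hℓ] using hjt⟩
  · rcases lt_or_gt_of_ne (e.injective.ne hℓk) with h | h
    · exact hc.le_abs_sub_of_mem_Ioo_shrink h hx hy
    · rw [abs_sub_comm]
      exact hc.le_abs_sub_of_mem_Ioo_shrink h hy hx

/-- covering construction (4.18)–(4.19): for a compact countable set `T ⊆ ℝ`
and `τ₀ > 0` there are finitely many open intervals `(λ_ℓ − τ_ℓ, λ_ℓ + τ_ℓ)` with radii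
`τ_ℓ ∈ (0,τ₀)` covering `T`, each contained in `(λ̃_ℓ − τ₀, λ̃_ℓ + τ₀)` for some `λ̃_ℓ ∈ T`,
and mutually at distance greater than `4σ₀` for some `σ₀ ∈ (0,τ₀)`. -/
theorem stmt7 (T : Set ℝ) (hTc : IsCompact T) (hTcount : T.Countable) (τ₀ : ℝ) (hτ₀ : 0 < τ₀) :
    ∃ (L : ℕ) (lam τ : Fin L → ℝ) (σ₀ : ℝ),
      (∀ ℓ, 0 < τ ℓ ∧ τ ℓ < τ₀) ∧
      0 < σ₀ ∧ σ₀ < τ₀ ∧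
      (T ⊆ ⋃ ℓ : Fin L, Set.Ioo (lam ℓ - τ ℓ) (lam ℓ + τ ℓ)) ∧
      (∀ ℓ, ∃ lamt ∈ T,
        Set.Ioo (lam ℓ - τ ℓ) (lam ℓ + τ ℓ) ⊆ Set.Ioo (lamt - τ₀) (lamt + τ₀)) ∧
      (∀ ℓ k, ℓ ≠ k →
        4 * σ₀ < sInf { d : ℝ | ∃ a ∈ Set.Ioo (lam ℓ - τ ℓ) (lam ℓ + τ ℓ),
          ∃ b ∈ Set.Ioo (lam k - τ k) (lam k + τ k), d = |a - b| }) := by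
  obtain ⟨L, a, b, g, hg, hab, hcover, hmeet, hsep⟩ :=
    exists_separated_Ioo_cover hTc (hTcount.dense_compl ℝ) hτ₀
  have hlt : ∀ ℓ, a ℓ < b ℓ := fun ℓ => by
    obtain ⟨_, -, hx⟩ := hmeet ℓ; exact hx.1.trans hx.2
  refine ⟨L, fun ℓ => (a ℓ + b ℓ) / 2, fun ℓ => (b ℓ - a ℓ) / 2, min g τ₀ / 8,
    fun ℓ => ⟨by linarith [hlt ℓ], by linarith [hab ℓ]⟩, by positivity,
    by linarith [min_le_right g τ₀], ?_, fun ℓ => ?_, fun ℓ k hℓk => ?_⟩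
  all_goals simp only [Ioo_midpoint_sub_add_half]
  · exact hcover
  · obtain ⟨t, ht, hta, htb⟩ := hmeet ℓ
    exact ⟨t, ht, fun x hx => ⟨by linarith [hx.1, htb, hab ℓ], by linarith [hx.2, hta, hab ℓ]⟩⟩
  · calc 4 * (min g τ₀ / 8) < g := by linarith [min_le_left g τ₀]
      _ ≤ _ := le_sInf_abs_sub (nonempty_Ioo.2 (hlt ℓ)) (nonempty_Ioo.2 (hlt k)) (hsep ℓ k hℓk)
end

section
/- (Estimate (5.6)) Let ν ≥ 1 and 0 < ε < 1. Let I ∈ C^∞(ℝ^ν; ℝ) satisfy, for every multi-index β, |∂_x^β I(x)| ≤ C_β ⟨x⟩^{−|β|−ε} for all x ∈ ℝ^ν, where ⟨x⟩ = (1+|x|²)^{1/2}. Let χ_0 ∈ C^∞(ℝ^ν) satisfy χ_0(x) = 1 for |x| ≥ 2 and χ_0(x) = 0 for |x| ≤ 1. For ρ ∈ (0,1) and t ∈ ℝ define I_ρ(x,t) = I(x) · χ_0(ρ x) · χ_0(⟨log⟨t⟩⟩ x / ⟨t⟩), where ⟨t⟩ = (1+t²)^{1/2} and ⟨log⟨t⟩⟩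 = (1+(log⟨t⟩)²)^{1/2}. Then for every multi-index β, every ℓ ≥ 0 and every ε_0 ∈ (0, ε) with ε_0 + ℓ < |β| + ε, there exists a constant C′_β > 0, independent of x ∈ ℝ^ν, t ∈ ℝ and ρ ∈ (0,1), such that |∂_x^β I_ρ(x,t)| ≤ C′_β ρ^{ε_0} ⟨t⟩^{−ℓ}. -/
open scoped BigOperators

noncomputable section

/-- `⟨t⟩ = (1+t²)^{1/2}` for a real number. -/
def japR (t : ℝ) : ℝ := Real.sqrt (1 + t ^ 2)

/-- `⟨x⟩ = (1+|x|²)^{1/2}` for a vector. -/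
def japV {ν : ℕ} (x : EuclideanSpace ℝ (Fin ν)) : ℝ := Real.sqrt (1 + ‖x‖ ^ 2)

/-- The cut-off potential `I_ρ(x,t) = I(x) χ₀(ρx) χ₀(⟨log⟨t⟩⟩ x/⟨t⟩)`. -/
def Icut {ν : ℕ} (I χ₀ : EuclideanSpace ℝ (Fin ν) → ℝ) (ρ t : ℝ)
    (x : EuclideanSpace ℝ (Fin ν)) : ℝ :=
  I x * χ₀ (ρ • x) * χ₀ ((japR (Real.log (japR t)) / japR t) • x)

lemma one_le_japR (t : ℝ) : 1 ≤ japR t := by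
  rw [japR, Real.one_le_sqrt]
  nlinarith [sq_nonneg t]

lemma japR_pos (t : ℝ) : 0 < japR t := lt_of_lt_of_le one_pos (one_le_japR t)

lemma one_le_japV {ν : ℕ} (x : EuclideanSpace ℝ (Fin ν)) : 1 ≤ japV x := by
  rw [japV, Real.one_le_sqrt]
  nlinarith [sq_nonneg ‖x‖]

lemma japV_pos {ν : ℕ} (x : EuclideanSpace ℝ (Fin ν)) : 0 < japV x :=
  lt_of_lt_of_le one_pos (one_le_japV x)

lemma norm_le_japV {ν : ℕ} (x : EuclideanSpace ℝ (Fin ν)) : ‖x‖ ≤ japV x := by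
  rw [japV]
  have h := Real.sq_sqrt (show (0:ℝ) ≤ 1 + ‖x‖^2 by positivity)
  nlinarith [Real.sqrt_nonneg (1+‖x‖^2), norm_nonneg x]

lemma japV_le {ν : ℕ} (x : EuclideanSpace ℝ (Fin ν)) (hx : 1 ≤ ‖x‖) :
    japV x ≤ Real.sqrt 2 * ‖x‖ := by
  rw [japV, show Real.sqrt 2 * ‖x‖ = Real.sqrt (2 * ‖x‖^2) by
    rw [Real.sqrt_mul (by norm_num), Real.sqrt_sq (norm_nonneg x)]]
  exact Real.sqrt_le_sqrt (by nlinarith)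

lemma japR_le_one_add_log {T : ℝ} (hT : 0 ≤ T) : japR T ≤ 1 + T := by
  rw [japR, show (1:ℝ) + T = Real.sqrt ((1+T)^2) by rw [Real.sqrt_sq (by linarith)]]
  exact Real.sqrt_le_sqrt (by nlinarith)

/-- local vanishing -/
lemma iteratedFDeriv_eq_zero_of_eqOn_zero {ν : ℕ} {f : EuclideanSpace ℝ (Fin ν) → ℝ}
    {s : Set (EuclideanSpace ℝ (Fin ν))} (hs : IsOpen s)
    {x : EuclideanSpace ℝ (Fin ν)} (hx : x ∈ s) (h : ∀ y ∈ s, f y = 0) (n : ℕ) :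
    iteratedFDeriv ℝ n f x = 0 := by
  have h1 : iteratedFDeriv ℝ n f x = iteratedFDeriv ℝ n (fun _ => (0:ℝ)) x := by
    rw [← iteratedFDerivWithin_of_isOpen n hs hx,
      ← iteratedFDerivWithin_of_isOpen (f := fun _ => (0:ℝ)) n hs hx]
    exact iteratedFDerivWithin_congr (fun y hy => h y hy) hx n
  rw [h1, iteratedFDeriv_zero_fun]
  rfl

/-- locally constant one, n ≠ 0 -/
lemma iteratedFDeriv_eq_zero_of_eqOn_one {ν : ℕ} {f : EuclideanSpace ℝ (Fin ν) → ℝ}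
    {s : Set (EuclideanSpace ℝ (Fin ν))} (hs : IsOpen s)
    {x : EuclideanSpace ℝ (Fin ν)} (hx : x ∈ s) (h : ∀ y ∈ s, f y = 1) {n : ℕ} (hn : n ≠ 0) :
    iteratedFDeriv ℝ n f x = 0 := by
  have h1 : iteratedFDeriv ℝ n f x = iteratedFDeriv ℝ n (fun _ => (1:ℝ)) x := by
    rw [← iteratedFDerivWithin_of_isOpen n hs hx,
      ← iteratedFDerivWithin_of_isOpen (f := fun _ => (1:ℝ)) n hs hx]
    exact iteratedFDerivWithin_congr (fun y hy => h y hy) hx n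
  rw [h1, iteratedFDeriv_const_of_ne hn]
  rfl

/-- scaling -/
lemma norm_iteratedFDeriv_scale {ν : ℕ} (g : EuclideanSpace ℝ (Fin ν) → ℝ)
    (hg : ContDiff ℝ (⊤ : ℕ∞) g) (c : ℝ) (n : ℕ) (x : EuclideanSpace ℝ (Fin ν)) :
    ‖iteratedFDeriv ℝ n (fun y => g (c • y)) x‖ ≤ |c|^n * ‖iteratedFDeriv ℝ n g (c • x)‖ := by
  set L : EuclideanSpace ℝ (Fin ν) →L[ℝ] EuclideanSpace ℝ (Fin ν) :=
    c • ContinuousLinearMap.id ℝ (EuclideanSpace ℝ (Fin ν)) with hL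
  have hfun : (fun y => g (c • y)) = g ∘ L := by
    funext y; simp [hL]
  rw [hfun, L.iteratedFDeriv_comp_right hg x (by exact_mod_cast (le_top : (n : ℕ∞) ≤ ⊤))]
  calc ‖(iteratedFDeriv ℝ n g (L x)).compContinuousLinearMap fun _ => L‖
      ≤ ‖iteratedFDeriv ℝ n g (L x)‖ * ∏ _i : Fin n, ‖L‖ :=
        ContinuousMultilinearMap.norm_compContinuousLinearMap_le _ _
    _ ≤ |c|^n * ‖iteratedFDeriv ℝ n g (c • x)‖ := by
        have hLx : L x = c • x := by simp [hL]
        have hLn : ‖L‖ ≤ |c| := by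
          apply ContinuousLinearMap.opNorm_le_bound _ (abs_nonneg c)
          intro y
          simp [hL, norm_smul]
        rw [hLx]
        have : (∏ _i : Fin n, ‖L‖) ≤ |c|^n := by
          rw [Finset.prod_const, Finset.card_univ, Fintype.card_fin]
          exact pow_le_pow_left₀ (norm_nonneg _) hLn n
        calc ‖iteratedFDeriv ℝ n g (c • x)‖ * ∏ _i : Fin n, ‖L‖
            ≤ ‖iteratedFDeriv ℝ n g (c • x)‖ * |c|^n := by
              gcongr
          _ = |c|^n * ‖iteratedFDeriv ℝ n g (c • x)‖ := mul_comm _ _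

/-- global bound on derivatives of the cutoff -/
lemma chi_deriv_bound {ν : ℕ} (χ₀ : EuclideanSpace ℝ (Fin ν) → ℝ)
    (hχsmooth : ContDiff ℝ (⊤ : ℕ∞) χ₀)
    (hχone : ∀ x : EuclideanSpace ℝ (Fin ν), 2 ≤ ‖x‖ → χ₀ x = 1) (j : ℕ) :
    ∃ M : ℝ, 1 ≤ M ∧ ∀ y : EuclideanSpace ℝ (Fin ν), ‖iteratedFDeriv ℝ j χ₀ y‖ ≤ M := by
  have hcont : Continuous (iteratedFDeriv ℝ j χ₀) :=
    hχsmooth.continuous_iteratedFDeriv (by exact_mod_cast le_top)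
  obtain ⟨M0, hM0⟩ := (isCompact_closedBall (0 : EuclideanSpace ℝ (Fin ν)) 2).exists_bound_of_continuousOn
    hcont.continuousOn
  refine ⟨max M0 1, le_max_right _ _, fun y => ?_⟩
  by_cases hy : ‖y‖ ≤ 2
  · exact le_trans (hM0 y (by simpa [Metric.mem_closedBall, dist_zero_right] using hy))
      (le_max_left _ _)
  · push_neg at hy
    rcases Nat.eq_zero_or_pos j with hj | hj
    · subst hj
      rw [norm_iteratedFDeriv_zero, hχone y (le_of_lt hy)]
      simp
    · have hzero : iteratedFDeriv ℝ j χ₀ y = 0 := by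
        apply iteratedFDeriv_eq_zero_of_eqOn_one
          (s := {z : EuclideanSpace ℝ (Fin ν) | 2 < ‖z‖})
          (isOpen_lt continuous_const continuous_norm) hy
          (fun z hz => hχone z (le_of_lt hz)) hj.ne'
      rw [hzero, norm_zero]
      exact le_trans zero_le_one (le_max_right _ _)

/-- scaled cutoff bound on the support region -/
lemma scaled_cutoff_bound {ν : ℕ} (χ₀ : EuclideanSpace ℝ (Fin ν) → ℝ)
    (hχsmooth : ContDiff ℝ (⊤ : ℕ∞) χ₀)
    (hχone : ∀ x : EuclideanSpace ℝ (Fin ν), 2 ≤ ‖x‖ → χ₀ x = 1) (j : ℕ) :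
    ∃ A : ℝ, 1 ≤ A ∧ ∀ c : ℝ, 0 < c → ∀ x : EuclideanSpace ℝ (Fin ν),
      1 ≤ ‖x‖ → 1 ≤ c * ‖x‖ →
      ‖iteratedFDeriv ℝ j (fun y => χ₀ (c • y)) x‖ ≤ A * ((japV x)⁻¹)^j := by
  obtain ⟨M, hM1, hM⟩ := chi_deriv_bound χ₀ hχsmooth hχone j
  refine ⟨M * (2 * Real.sqrt 2)^j, ?_, ?_⟩
  · have h2 : (1:ℝ) ≤ 2 * Real.sqrt 2 := by
      nlinarith [Real.sq_sqrt (show (0:ℝ) ≤ 2 by norm_num), Real.sqrt_nonneg 2,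
        Real.one_le_sqrt.mpr (show (1:ℝ) ≤ 2 by norm_num)]
    calc (1:ℝ) = 1 * 1 := by ring
      _ ≤ M * (2 * Real.sqrt 2)^j := by
          exact mul_le_mul hM1 (one_le_pow₀ h2) zero_le_one (le_trans zero_le_one hM1)
  · intro c hc x hx1 hcx
    by_cases hb : c * ‖x‖ ≤ 2
    · -- use scaling
      have h1 := norm_iteratedFDeriv_scale χ₀ hχsmooth c j x
      have hcle : c ≤ 2 * Real.sqrt 2 * (japV x)⁻¹ := by
        have hxpos : (0:ℝ) < ‖x‖ := lt_of_lt_of_le one_pos hx1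
        have hjle : japV x ≤ Real.sqrt 2 * ‖x‖ := japV_le x hx1
        have hjpos := japV_pos x
        rw [show 2 * Real.sqrt 2 * (japV x)⁻¹ = 2 * Real.sqrt 2 / japV x from
          (div_eq_mul_inv _ _).symm, le_div_iff₀ hjpos]
        nlinarith [mul_le_mul_of_nonneg_left hjle hc.le,
          mul_le_mul_of_nonneg_left hb (Real.sqrt_nonneg 2)]
      calc ‖iteratedFDeriv ℝ j (fun y => χ₀ (c • y)) x‖
          ≤ |c|^j * ‖iteratedFDeriv ℝ j χ₀ (c • x)‖ := h1
        _ ≤ (2 * Real.sqrt 2 * (japV x)⁻¹)^j * M := by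
            have hnn : (0:ℝ) ≤ 2 * Real.sqrt 2 * (japV x)⁻¹ :=
              mul_nonneg (by positivity) (inv_nonneg.mpr (japV_pos x).le)
            refine mul_le_mul ?_ (hM _) (norm_nonneg _) (pow_nonneg hnn j)
            rw [abs_of_pos hc]
            exact pow_le_pow_left₀ hc.le hcle j
        _ = M * (2 * Real.sqrt 2)^j * ((japV x)⁻¹)^j := by
            rw [mul_pow]; ring
    · push_neg at hb
      rcases Nat.eq_zero_or_pos j with hj | hj
      · subst hj
        rw [norm_iteratedFDeriv_zero]
        have : χ₀ (c • x) = 1 := by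
          apply hχone
          rw [norm_smul, Real.norm_eq_abs, abs_of_pos hc]
          linarith
        rw [this]
        simp only [pow_zero, mul_one, norm_one]
        exact hM1
      · have hzero : iteratedFDeriv ℝ j (fun y => χ₀ (c • y)) x = 0 := by
          apply iteratedFDeriv_eq_zero_of_eqOn_one
            (s := {z : EuclideanSpace ℝ (Fin ν) | 2 < c * ‖z‖})
            (isOpen_lt continuous_const (continuous_const.mul continuous_norm)) hb
            (fun z hz => hχone _ (by
              rw [norm_smul, Real.norm_eq_abs, abs_of_pos hc]
              exact le_of_lt hz)) hj.ne'
        rw [hzero, norm_zero]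
        have hnn : (0:ℝ) ≤ ((japV x)⁻¹)^j := pow_nonneg (inv_nonneg.mpr (japV_pos x).le) j
        exact mul_nonneg (mul_nonneg (le_trans zero_le_one hM1) (by positivity)) hnn

lemma kappa_bound (δ ℓ : ℝ) (hδ : ℓ < δ) (hℓ : 0 ≤ ℓ) :
    ∃ Cδ : ℝ, 0 < Cδ ∧ ∀ t : ℝ,
      (japR (Real.log (japR t)) / japR t) ^ δ ≤ Cδ * japR t ^ (-ℓ) := by
  have hδ0 : 0 < δ := lt_of_le_of_lt hℓ hδ
  set α := (δ - ℓ)/δ with hα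
  have hα0 : 0 < α := div_pos (by linarith) hδ0
  refine ⟨(1 + α⁻¹) ^ δ, Real.rpow_pos_of_pos (by positivity) δ, fun t => ?_⟩
  set T := japR t with hT
  have hT1 : 1 ≤ T := one_le_japR t
  have hT0 : 0 < T := lt_of_lt_of_le one_pos hT1
  have hs0 : 0 ≤ Real.log T := Real.log_nonneg hT1
  have hTα0 : 0 < T ^ α := Real.rpow_pos_of_pos hT0 α
  have hTα1 : 1 ≤ T ^ α := by
    rw [show (1:ℝ) = T ^ (0:ℝ) by rw [Real.rpow_zero]]
    exact Real.rpow_le_rpow_of_exponent_le hT1 hα0.le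
  have hlog : Real.log T ≤ α⁻¹ * T ^ α := by
    have h1 : Real.log (T ^ α) = α * Real.log T := Real.log_rpow hT0 α
    have h2 : Real.log (T ^ α) ≤ T ^ α - 1 := Real.log_le_sub_one_of_pos hTα0
    calc Real.log T = α⁻¹ * (α * Real.log T) := by field_simp
      _ ≤ α⁻¹ * T ^ α := by
          apply mul_le_mul_of_nonneg_left _ (inv_nonneg.mpr hα0.le)
          rw [← h1]; linarith
  have hL : japR (Real.log T) ≤ (1 + α⁻¹) * T ^ α := by
    calc japR (Real.log T) ≤ 1 + Real.log T := japR_le_one_add_log hs0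
      _ ≤ 1 + α⁻¹ * T ^ α := by linarith
      _ ≤ (1 + α⁻¹) * T ^ α := by nlinarith [inv_nonneg.mpr hα0.le]
  have hLnn : (0:ℝ) ≤ japR (Real.log T) := (japR_pos _).le
  have hαδ : α * δ = δ - ℓ := by rw [hα]; field_simp
  have hTδ0 : (0:ℝ) < T ^ δ := Real.rpow_pos_of_pos hT0 δ
  have hTℓ0 : (0:ℝ) < T ^ ℓ := Real.rpow_pos_of_pos hT0 ℓ
  calc (japR (Real.log T) / T) ^ δ
      = japR (Real.log T) ^ δ / T ^ δ := Real.div_rpow hLnn hT0.le δ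
    _ ≤ ((1 + α⁻¹) * T ^ α) ^ δ / T ^ δ := by
        have hnum := Real.rpow_le_rpow hLnn hL hδ0.le
        gcongr
    _ = (1 + α⁻¹) ^ δ * T ^ (δ - ℓ) / T ^ δ := by
        rw [Real.mul_rpow (by positivity) hTα0.le, ← Real.rpow_mul hT0.le, hαδ]
    _ = (1 + α⁻¹) ^ δ * T ^ (-ℓ) := by
        rw [Real.rpow_sub hT0, Real.rpow_neg hT0.le]
        field_simp

/-- estimate (5.6): if `|∂^β I(x)| ≤ C_β ⟨x⟩^{−|β|−ε}` and `χ₀` is a smooth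
cut-off vanishing on `|x| ≤ 1` and equal to `1` on `|x| ≥ 2`, then for every order `n`,
every `ℓ ≥ 0` and every `ε₀ ∈ (0,ε)` with `ε₀ + ℓ < n + ε` there is `C' > 0`, independent
of `x`, `t` and `ρ ∈ (0,1)`, with `|∂^β I_ρ(x,t)| ≤ C' ρ^{ε₀} ⟨t⟩^{−ℓ}` for `|β| = n`. -/

theorem stmt9 (ν : ℕ) (hν : 1 ≤ ν) (ε : ℝ) (hε0 : 0 < ε) (hε1 : ε < 1)
    (I : EuclideanSpace ℝ (Fin ν) → ℝ) (hI : ContDiff ℝ (⊤ : ℕ∞) I)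
    (C : ℕ → ℝ)
    (hC : ∀ (n : ℕ) (x : EuclideanSpace ℝ (Fin ν)),
      ‖iteratedFDeriv ℝ n I x‖ ≤ C n * japV x ^ (-(n : ℝ) - ε))
    (χ₀ : EuclideanSpace ℝ (Fin ν) → ℝ) (hχsmooth : ContDiff ℝ (⊤ : ℕ∞) χ₀)
    (hχone : ∀ x : EuclideanSpace ℝ (Fin ν), 2 ≤ ‖x‖ → χ₀ x = 1)
    (hχzero : ∀ x : EuclideanSpace ℝ (Fin ν), ‖x‖ ≤ 1 → χ₀ x = 0) :
    ∀ (n : ℕ) (ℓ ε₀ : ℝ), 0 ≤ ℓ → 0 < ε₀ → ε₀ < ε → ε₀ + ℓ < (n : ℝ) + ε →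
      ∃ C' : ℝ, 0 < C' ∧ ∀ ρ ∈ Set.Ioo (0:ℝ) 1, ∀ (t : ℝ) (x : EuclideanSpace ℝ (Fin ν)),
        ‖iteratedFDeriv ℝ n (fun y => Icut I χ₀ ρ t y) x‖ ≤ C' * ρ ^ ε₀ * japR t ^ (-ℓ) := by
  intro n ℓ ε₀ hℓ hε₀pos hε₀ε hsum
  choose A hA1 hA2 using fun j => scaled_cutoff_bound χ₀ hχsmooth hχone j
  have hCnn : ∀ a : ℕ, 0 ≤ C a := by
    intro a
    have h := hC a 0
    have h0 : japV (0 : EuclideanSpace ℝ (Fin ν)) = 1 := by simp [japV]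
    rw [h0, Real.one_rpow, mul_one] at h
    exact le_trans (norm_nonneg _) h
  set δ := (n:ℝ) + ε - ε₀ with hδdef
  have hℓδ : ℓ < δ := by rw [hδdef]; linarith
  obtain ⟨Cδ, hCδ0, hCδ⟩ := kappa_bound δ ℓ hℓδ hℓ
  set Kc : ℝ := ∑ i ∈ Finset.range (n+1), (n.choose i : ℝ) *
      (∑ a ∈ Finset.range (i+1), (i.choose a : ℝ) * C a * A (i-a)) * A (n-i) with hKc
  have hKcnn : 0 ≤ Kc := by
    rw [hKc]
    apply Finset.sum_nonneg; intro i _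
    have hin : 0 ≤ ∑ a ∈ Finset.range (i+1), (i.choose a : ℝ) * C a * A (i-a) := by
      apply Finset.sum_nonneg; intro a _
      exact mul_nonneg (mul_nonneg (by positivity) (hCnn a)) (le_trans zero_le_one (hA1 _))
    exact mul_nonneg (mul_nonneg (by positivity) hin) (le_trans zero_le_one (hA1 _))
  refine ⟨(Kc + 1) * Cδ, mul_pos (by linarith) hCδ0, fun ρ hρ t x => ?_⟩
  obtain ⟨hρ0, hρ1⟩ := hρ
  set κ := japR (Real.log (japR t)) / japR t with hκ
  have hκ0 : 0 < κ := div_pos (japR_pos _) (japR_pos _)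
  have hρε₀ : (0:ℝ) ≤ ρ ^ ε₀ := Real.rpow_nonneg hρ0.le _
  have hTℓ : (0:ℝ) ≤ japR t ^ (-ℓ) := Real.rpow_nonneg (japR_pos t).le _
  have hRHSnn : 0 ≤ (Kc+1) * Cδ * ρ ^ ε₀ * japR t ^ (-ℓ) :=
    mul_nonneg (mul_nonneg (mul_nonneg (by linarith) hCδ0.le) hρε₀) hTℓ
  by_cases hs1 : ρ * ‖x‖ < 1
  · have hzero : iteratedFDeriv ℝ n (fun y => Icut I χ₀ ρ t y) x = 0 := by
      apply iteratedFDeriv_eq_zero_of_eqOn_zero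
        (s := {y : EuclideanSpace ℝ (Fin ν) | ρ * ‖y‖ < 1})
        (isOpen_lt (continuous_const.mul continuous_norm) continuous_const) hs1
      intro y hy
      have h1 : χ₀ (ρ • y) = 0 := hχzero _
        (by rw [norm_smul, Real.norm_eq_abs, abs_of_pos hρ0]; exact le_of_lt hy)
      simp [Icut, h1]
    rw [hzero, norm_zero]; exact hRHSnn
  by_cases hs2 : κ * ‖x‖ < 1
  · have hzero : iteratedFDeriv ℝ n (fun y => Icut I χ₀ ρ t y) x = 0 := by
      apply iteratedFDeriv_eq_zero_of_eqOn_zero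
        (s := {y : EuclideanSpace ℝ (Fin ν) | κ * ‖y‖ < 1})
        (isOpen_lt (continuous_const.mul continuous_norm) continuous_const) hs2
      intro y hy
      have h1 : χ₀ (κ • y) = 0 := hχzero _
        (by rw [norm_smul, Real.norm_eq_abs, abs_of_pos hκ0]; exact le_of_lt hy)
      simp only [Icut, ← hκ, h1, mul_zero]
    rw [hzero, norm_zero]; exact hRHSnn
  push_neg at hs1 hs2
  have hx1 : 1 ≤ ‖x‖ := by nlinarith [norm_nonneg x, mul_nonneg hρ0.le (norm_nonneg x)]
  have hjnn : (0:ℝ) ≤ (japV x)⁻¹ := inv_nonneg.mpr (japV_pos x).le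
  have hjr : (0:ℝ) ≤ japV x ^ (-ε) := Real.rpow_nonneg (japV_pos x).le _
  have hρx : (japV x)⁻¹ ≤ ρ := by
    have h1 : 1 ≤ ρ * japV x :=
      le_trans hs1 (mul_le_mul_of_nonneg_left (norm_le_japV x) hρ0.le)
    have h2 := mul_le_mul_of_nonneg_right h1 hjnn
    simpa [mul_assoc, mul_inv_cancel₀ (japV_pos x).ne'] using h2
  have hκx : (japV x)⁻¹ ≤ κ := by
    have h1 : 1 ≤ κ * japV x :=
      le_trans hs2 (mul_le_mul_of_nonneg_left (norm_le_japV x) hκ0.le)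
    have h2 := mul_le_mul_of_nonneg_right h1 hjnn
    simpa [mul_assoc, mul_inv_cancel₀ (japV_pos x).ne'] using h2
  have hsm : ∀ c : ℝ, ContDiff ℝ (⊤ : ℕ∞) (fun y : EuclideanSpace ℝ (Fin ν) => χ₀ (c • y)) :=
    fun c => hχsmooth.comp (contDiff_const_smul c)
  have hg1 : ContDiff ℝ (⊤ : ℕ∞) (fun y => I y * χ₀ (ρ • y)) := hI.mul (hsm ρ)
  have hIbd : ∀ a : ℕ,
      ‖iteratedFDeriv ℝ a I x‖ ≤ C a * (japV x ^ (-ε) * ((japV x)⁻¹)^a) := by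
    intro a
    have h := hC a x
    have heq : japV x ^ (-(a:ℝ) - ε) = japV x ^ (-ε) * ((japV x)⁻¹)^a := by
      rw [inv_pow, ← Real.rpow_natCast (japV x) a, ← Real.rpow_neg (japV_pos x).le,
        ← Real.rpow_add (japV_pos x)]
      ring_nf
    rw [heq] at h
    exact h
  have hg1bd : ∀ i, i ≤ n → ‖iteratedFDeriv ℝ i (fun y => I y * χ₀ (ρ • y)) x‖ ≤
      (∑ a ∈ Finset.range (i+1), (i.choose a : ℝ) * C a * A (i-a)) *
        (japV x ^ (-ε) * ((japV x)⁻¹)^i) := by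
    intro i hi
    refine le_trans (norm_iteratedFDeriv_mul_le hI (hsm ρ) x (by exact_mod_cast le_top)) ?_
    rw [Finset.sum_mul]
    apply Finset.sum_le_sum
    intro a ha
    rw [Finset.mem_range, Nat.lt_succ_iff] at ha
    have h1 := hIbd a
    have h2 := hA2 (i-a) ρ hρ0 x hx1 hs1
    have hpow : ((japV x)⁻¹)^a * ((japV x)⁻¹)^(i-a) = ((japV x)⁻¹)^i := by
      rw [← pow_add]; congr 1; omega
    calc (i.choose a : ℝ) * ‖iteratedFDeriv ℝ a I x‖ *
          ‖iteratedFDeriv ℝ (i-a) (fun y => χ₀ (ρ • y)) x‖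
        ≤ (i.choose a : ℝ) * (C a * (japV x ^ (-ε) * ((japV x)⁻¹)^a)) *
            (A (i-a) * ((japV x)⁻¹)^(i-a)) := by
          refine mul_le_mul (mul_le_mul_of_nonneg_left h1 (by positivity)) h2
            (norm_nonneg _) ?_
          exact mul_nonneg (by positivity)
            (mul_nonneg (hCnn a) (mul_nonneg hjr (pow_nonneg hjnn a)))
      _ = (i.choose a : ℝ) * C a * A (i-a) * (japV x ^ (-ε) * ((japV x)⁻¹)^i) := by
          rw [← hpow]; ring
  have hsum2 : ∑ i ∈ Finset.range (n+1), (n.choose i : ℝ) *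
        ‖iteratedFDeriv ℝ i (fun y => I y * χ₀ (ρ • y)) x‖ *
        ‖iteratedFDeriv ℝ (n-i) (fun y => χ₀ (κ • y)) x‖
      ≤ Kc * (japV x ^ (-ε) * ((japV x)⁻¹)^n) := by
    rw [hKc, Finset.sum_mul]
    apply Finset.sum_le_sum
    intro i hi
    rw [Finset.mem_range, Nat.lt_succ_iff] at hi
    have h1 := hg1bd i hi
    have h2 := hA2 (n-i) κ hκ0 x hx1 hs2
    have hSnn : 0 ≤ ∑ a ∈ Finset.range (i+1), (i.choose a : ℝ) * C a * A (i-a) := by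
      apply Finset.sum_nonneg; intro a _
      exact mul_nonneg (mul_nonneg (by positivity) (hCnn a)) (le_trans zero_le_one (hA1 _))
    have hpow : ((japV x)⁻¹)^i * ((japV x)⁻¹)^(n-i) = ((japV x)⁻¹)^n := by
      rw [← pow_add]; congr 1; omega
    calc (n.choose i : ℝ) * ‖iteratedFDeriv ℝ i (fun y => I y * χ₀ (ρ • y)) x‖ *
          ‖iteratedFDeriv ℝ (n-i) (fun y => χ₀ (κ • y)) x‖
        ≤ (n.choose i : ℝ) *
            ((∑ a ∈ Finset.range (i+1), (i.choose a : ℝ) * C a * A (i-a)) *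
              (japV x ^ (-ε) * ((japV x)⁻¹)^i)) *
            (A (n-i) * ((japV x)⁻¹)^(n-i)) := by
          refine mul_le_mul (mul_le_mul_of_nonneg_left h1 (by positivity)) h2
            (norm_nonneg _) ?_
          exact mul_nonneg (by positivity)
            (mul_nonneg hSnn (mul_nonneg hjr (pow_nonneg hjnn i)))
      _ = (n.choose i : ℝ) *
            (∑ a ∈ Finset.range (i+1), (i.choose a : ℝ) * C a * A (i-a)) * A (n-i) *
            (japV x ^ (-ε) * ((japV x)⁻¹)^n) := by
          rw [← hpow]; ring
  have hfinal : japV x ^ (-ε) * ((japV x)⁻¹)^n ≤ ρ ^ ε₀ * (Cδ * japR t ^ (-ℓ)) := by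
    have hhh : japV x ^ (-ε) * ((japV x)⁻¹)^n = japV x ^ (-ε₀) * japV x ^ (-δ) := by
      rw [inv_pow, ← Real.rpow_natCast (japV x) n, ← Real.rpow_neg (japV_pos x).le,
        ← Real.rpow_add (japV_pos x), ← Real.rpow_add (japV_pos x)]
      congr 1
      rw [hδdef]; ring
    rw [hhh]
    have e1 : japV x ^ (-ε₀) ≤ ρ ^ ε₀ := by
      rw [Real.rpow_neg (japV_pos x).le, ← Real.inv_rpow (japV_pos x).le]
      exact Real.rpow_le_rpow hjnn hρx hε₀pos.le
    have e2 : japV x ^ (-δ) ≤ κ ^ δ := by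
      rw [Real.rpow_neg (japV_pos x).le, ← Real.inv_rpow (japV_pos x).le]
      exact Real.rpow_le_rpow hjnn hκx (by rw [hδdef]; linarith)
    have e3 := hCδ t
    rw [← hκ] at e3
    exact mul_le_mul e1 (le_trans e2 e3) (Real.rpow_nonneg (japV_pos x).le _) hρε₀
  calc ‖iteratedFDeriv ℝ n (fun y => Icut I χ₀ ρ t y) x‖
      ≤ ∑ i ∈ Finset.range (n+1), (n.choose i : ℝ) *
          ‖iteratedFDeriv ℝ i (fun y => I y * χ₀ (ρ • y)) x‖ *
          ‖iteratedFDeriv ℝ (n-i) (fun y => χ₀ (κ • y)) x‖ := by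
        exact norm_iteratedFDeriv_mul_le (f := fun y => I y * χ₀ (ρ • y))
          (g := fun y => χ₀ (κ • y)) hg1 (hsm κ) x (by exact_mod_cast le_top)
    _ ≤ Kc * (japV x ^ (-ε) * ((japV x)⁻¹)^n) := hsum2
    _ ≤ Kc * (ρ ^ ε₀ * (Cδ * japR t ^ (-ℓ))) := mul_le_mul_of_nonneg_left hfinal hKcnn
    _ ≤ (Kc + 1) * Cδ * ρ ^ ε₀ * japR t ^ (-ℓ) := by
        nlinarith [mul_nonneg (mul_nonneg hCδ0.le hρε₀) hTℓ]
end
end
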